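/- Suppose the class set splits as I = I₁ ∪ I₂ with I₁ ∩ I₂ = ∅, both nonempty, and (⋃_{i∈I₁} 𝒦_i) ∩ (⋃_{i∈I₂} 𝒦_i) = ∅. Let Φ₁ and Φ₂ be the balance functions of the two subsystems (classes I₁ with servers ⋃_{i∈I₁} 𝒦_i, and classes I₂ with servers ⋃_{i∈I₂} 𝒦_i, with the same assignments and service rates). Then for every x ∈ ℕ^I, Φ(x) = Φ₁(x restricted to I₁) · Φ₂(x restricted to I₂). Consequently G(λ) = G₁(λ restricted to I₁) · G₂(λ restricted to I₂), and when these are finite, ψ = ψ₁ · ψ₂. -/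

import Mathlib

open scoped BigOperators

/-- The balance function of balanced fairness: `Φ(0) = 1` and
`Φ(x) = (∑_{i : x_i > 0} Φ(x - e_i)) / M(⋃_{i : x_i > 0} 𝒦_i)`. -/
noncomputable def Phi {I K : Type} [Fintype I] [DecidableEq I] [DecidableEq K]
    (μ : K → ℝ) (Ka : I → Finset K) (x : I → ℕ) : ℝ :=
  if x = fun _ => 0 then 1
  else (∑ i ∈ (Finset.univ.filter (fun i => 0 < x i)).attach,
      Phi μ Ka (Function.update x i.1 (x i.1 - 1))) /
    (∑ k ∈ (Finset.univ.filter (fun i => 0 < x i)).biUnion Ka, μ k)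
termination_by ∑ i, x i
decreasing_by
  have hi := i.2
  simp only [Finset.mem_filter] at hi
  apply Finset.sum_lt_sum
  · intro j _
    rcases eq_or_ne j i.1 with rfl | h
    · simp [Function.update_self]
    · rw [Function.update_of_ne h]
  · exact ⟨i.1, Finset.mem_univ i.1, by simp [Function.update_self]; omega⟩

/-! Since the balance equations `M(x) Φ(x) = ∑_{i : x_i > 0} Φ(x - e_i)` determine `Φ`, it suffices
to check that `Φ₁(x₁) Φ₂(x₂)` satisfies them. With disjoint server sets the capacity splits as
`M(x) = M₁(x₁) + M₂(x₂)` and the right-hand side splits as `(M₁ Φ₁) Φ₂ + Φ₁ (M₂ Φ₂)`, so this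
follows by induction on `|x|`. The series then factor through `ℕ^I ≃ ℕ^{I₁} × ℕ^{I₂}`, the
rearrangement being justified by the nonnegativity of the terms. -/

open Finset

section SumArrow

variable {α β γ : Type*}

theorem ENNReal.tsum_sumArrow_mul (f : (α → γ) → ENNReal) (g : (β → γ) → ENNReal) :
    ∑' x : α ⊕ β → γ, f (fun a => x (Sum.inl a)) * g (fun b => x (Sum.inr b)) =
      (∑' y, f y) * ∑' z, g z := by
  rw [← (Equiv.sumArrowEquivProdArrow α β γ).symm.tsum_eq, ENNReal.tsum_prod',
    ← ENNReal.tsum_mul_right]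
  simp_rw [← ENNReal.tsum_mul_left]
  rfl

theorem tsum_sumArrow_mul_of_nonneg {f : (α → γ) → ℝ} {g : (β → γ) → ℝ}
    (hf : Summable f) (hg : Summable g) (hf₀ : 0 ≤ f) (hg₀ : 0 ≤ g) :
    ∑' x : α ⊕ β → γ, f (fun a => x (Sum.inl a)) * g (fun b => x (Sum.inr b)) =
      (∑' y, f y) * ∑' z, g z := by
  rw [← (Equiv.sumArrowEquivProdArrow α β γ).symm.tsum_eq,
    hf.tsum_mul_tsum hg (hf.mul_of_nonneg hg hf₀ hg₀)]
  rfl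

end SumArrow

section BalanceFunction

variable {I K : Type} [Fintype I] [DecidableEq K] (μ : K → ℝ) (Ka : I → Finset K)

def capacity (x : I → ℕ) : ℝ :=
  ∑ k ∈ (univ.filter fun i => 0 < x i).biUnion Ka, μ k

theorem capacity_pos (hμ : ∀ k, 0 < μ k) (hKa : ∀ i, (Ka i).Nonempty) {x : I → ℕ}
    (hx : x ≠ 0) : 0 < capacity μ Ka x := by
  obtain ⟨i, hi⟩ := Function.ne_iff.1 hx
  obtain ⟨k, hk⟩ := hKa i
  exact sum_pos (fun k _ => hμ k)
    ⟨k, mem_biUnion.2 ⟨i, mem_filter.2 ⟨mem_univ i, Nat.pos_of_ne_zero hi⟩, hk⟩⟩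

variable [DecidableEq I]

theorem sum_update_pred_lt {x : I → ℕ} {i : I} (hi : 0 < x i) :
    ∑ j, Function.update x i (x i - 1) j < ∑ j, x j := by
  refine sum_lt_sum (fun j _ => ?_) ⟨i, mem_univ i, by simp only [Function.update_self]; omega⟩
  rcases eq_or_ne j i with rfl | h
  · simp only [Function.update_self]; omega
  · rw [Function.update_of_ne h]

theorem Phi_zero : Phi μ Ka 0 = 1 := by
  rw [Phi, if_pos (show (0 : I → ℕ) = fun _ => 0 from rfl)]

theorem Phi_of_ne_zero {x : I → ℕ} (hx : x ≠ 0) :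
    Phi μ Ka x = (∑ i ∈ univ.filter (fun i => 0 < x i),
      Phi μ Ka (Function.update x i (x i - 1))) / capacity μ Ka x := by
  rw [Phi, if_neg (show x ≠ fun _ => 0 from hx),
    sum_attach _ fun i => Phi μ Ka (Function.update x i (x i - 1))]
  rfl

theorem Phi_nonneg (hμ : ∀ k, 0 ≤ μ k) (x : I → ℕ) : 0 ≤ Phi μ Ka x := by
  rcases eq_or_ne x 0 with rfl | hx
  · rw [Phi_zero]; exact zero_le_one
  rw [Phi_of_ne_zero μ Ka hx]
  exact div_nonneg (sum_nonneg fun i hi => Phi_nonneg hμ _) (sum_nonneg fun k _ => hμ k)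
termination_by ∑ i, x i
decreasing_by exact sum_update_pred_lt (mem_filter.1 hi).2

theorem capacity_mul_Phi (hμ : ∀ k, 0 < μ k) (hKa : ∀ i, (Ka i).Nonempty) (x : I → ℕ) :
    capacity μ Ka x * Phi μ Ka x =
      ∑ i ∈ univ.filter (fun i => 0 < x i), Phi μ Ka (Function.update x i (x i - 1)) := by
  rcases eq_or_ne x 0 with rfl | hx
  · simp [capacity]
  rw [Phi_of_ne_zero μ Ka hx, mul_div_cancel₀ _ (capacity_pos μ Ka hμ hKa hx).ne']

end BalanceFunction

section SumType

variable {I₁ I₂ K : Type} [Fintype I₁] [Fintype I₂] [DecidableEq K]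
  (μ : K → ℝ) (Ka : I₁ ⊕ I₂ → Finset K)

theorem capacity_sum_type
    (hdisj : Disjoint (univ.biUnion fun i : I₁ => Ka (Sum.inl i))
      (univ.biUnion fun i : I₂ => Ka (Sum.inr i))) (x : I₁ ⊕ I₂ → ℕ) :
    capacity μ Ka x =
      capacity μ (fun i => Ka (Sum.inl i)) (fun i => x (Sum.inl i)) +
        capacity μ (fun i => Ka (Sum.inr i)) (fun i => x (Sum.inr i)) := by
  have hunion : (univ.filter fun i => 0 < x i).biUnion Ka =
      (univ.filter fun i => 0 < x (Sum.inl i)).biUnion (fun i => Ka (Sum.inl i)) ∪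
        (univ.filter fun i => 0 < x (Sum.inr i)).biUnion (fun i => Ka (Sum.inr i)) := by
    ext k
    simp [Sum.exists]
  rw [capacity, hunion, sum_union (hdisj.mono (biUnion_subset_biUnion_of_subset_left _
    (subset_univ _)) (biUnion_subset_biUnion_of_subset_left _ (subset_univ _)))]
  rfl

variable [DecidableEq I₁] [DecidableEq I₂]

theorem Phi_sum_type (hμ : ∀ k, 0 < μ k) (hKa : ∀ i, (Ka i).Nonempty)
    (hdisj : Disjoint (univ.biUnion fun i : I₁ => Ka (Sum.inl i))
      (univ.biUnion fun i : I₂ => Ka (Sum.inr i))) (x : I₁ ⊕ I₂ → ℕ) :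
    Phi μ Ka x =
      Phi μ (fun i => Ka (Sum.inl i)) (fun i => x (Sum.inl i)) *
        Phi μ (fun i => Ka (Sum.inr i)) (fun i => x (Sum.inr i)) := by
  set x₁ : I₁ → ℕ := fun i => x (Sum.inl i)
  set x₂ : I₂ → ℕ := fun i => x (Sum.inr i)
  rcases eq_or_ne x 0 with rfl | hx
  · rw [Phi_zero, show x₁ = 0 from rfl, show x₂ = 0 from rfl, Phi_zero, Phi_zero, one_mul]
  have ih₁ : ∀ i ∈ univ.filter fun i => 0 < x₁ i,
      Phi μ Ka (Function.update x (Sum.inl i) (x (Sum.inl i) - 1)) =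
        Phi μ (fun i => Ka (Sum.inl i)) (Function.update x₁ i (x₁ i - 1)) *
          Phi μ (fun i => Ka (Sum.inr i)) x₂ := fun i hi => by
    rw [Phi_sum_type hμ hKa hdisj, Function.update_comp_eq_of_injective' _ Sum.inl_injective,
      Function.update_comp_eq_of_forall_ne' _ _ fun _ => Sum.inr_ne_inl]
  have ih₂ : ∀ i ∈ univ.filter fun i => 0 < x₂ i,
      Phi μ Ka (Function.update x (Sum.inr i) (x (Sum.inr i) - 1)) =
        Phi μ (fun i => Ka (Sum.inl i)) x₁ *
          Phi μ (fun i => Ka (Sum.inr i)) (Function.update x₂ i (x₂ i - 1)) := fun i hi => by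
    rw [Phi_sum_type hμ hKa hdisj, Function.update_comp_eq_of_injective' _ Sum.inr_injective,
      Function.update_comp_eq_of_forall_ne' _ _ fun _ => Sum.inl_ne_inr]
  rw [Phi_of_ne_zero μ Ka hx, div_eq_iff (capacity_pos μ Ka hμ hKa hx).ne', sum_filter,
    Fintype.sum_sum_type, ← sum_filter, ← sum_filter, sum_congr rfl ih₁, sum_congr rfl ih₂,
    ← sum_mul, ← mul_sum, ← capacity_mul_Phi _ _ hμ (fun _ => hKa _),
    ← capacity_mul_Phi _ _ hμ (fun _ => hKa _), capacity_sum_type μ Ka hdisj]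
  ring
termination_by ∑ i, x i
decreasing_by all_goals exact sum_update_pred_lt (mem_filter.1 hi).2

theorem Phi_mul_prod_pow_sum_type (hμ : ∀ k, 0 < μ k) (hKa : ∀ i, (Ka i).Nonempty)
    (hdisj : Disjoint (univ.biUnion fun i : I₁ => Ka (Sum.inl i))
      (univ.biUnion fun i : I₂ => Ka (Sum.inr i))) (lam : I₁ ⊕ I₂ → ℝ) (x : I₁ ⊕ I₂ → ℕ) :
    Phi μ Ka x * ∏ i, lam i ^ x i =
      (Phi μ (fun i => Ka (Sum.inl i)) (fun i => x (Sum.inl i)) *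
          ∏ i, lam (Sum.inl i) ^ x (Sum.inl i)) *
        (Phi μ (fun i => Ka (Sum.inr i)) (fun i => x (Sum.inr i)) *
          ∏ i, lam (Sum.inr i) ^ x (Sum.inr i)) := by
  rw [Phi_sum_type μ Ka hμ hKa hdisj, Fintype.prod_sum_type]
  ring

end SumType

theorem independent_subsystems_factorization_general
    {I₁ I₂ K : Type} [Fintype I₁] [DecidableEq I₁]
    [Fintype I₂] [DecidableEq I₂]
    [DecidableEq K]
    (μ : K → ℝ) (hμ : ∀ k, 0 < μ k)
    (Ka : I₁ ⊕ I₂ → Finset K) (hKa : ∀ i, (Ka i).Nonempty)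
    (lam : I₁ ⊕ I₂ → ℝ) (hlam : ∀ i, 0 ≤ lam i)
    (hdisj : Disjoint (Finset.univ.biUnion (fun i : I₁ => Ka (Sum.inl i)))
                      (Finset.univ.biUnion (fun i : I₂ => Ka (Sum.inr i)))) :
    (∀ x : I₁ ⊕ I₂ → ℕ,
      Phi μ Ka x =
        Phi μ (fun i : I₁ => Ka (Sum.inl i)) (fun i => x (Sum.inl i)) *
          Phi μ (fun i : I₂ => Ka (Sum.inr i)) (fun i => x (Sum.inr i))) ∧
    (∑' x : I₁ ⊕ I₂ → ℕ, ENNReal.ofReal (Phi μ Ka x * ∏ i, lam i ^ x i)) =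
      (∑' x₁ : I₁ → ℕ, ENNReal.ofReal
          (Phi μ (fun i : I₁ => Ka (Sum.inl i)) x₁ * ∏ i, lam (Sum.inl i) ^ x₁ i)) *
      (∑' x₂ : I₂ → ℕ, ENNReal.ofReal
          (Phi μ (fun i : I₂ => Ka (Sum.inr i)) x₂ * ∏ i, lam (Sum.inr i) ^ x₂ i)) ∧
    (Summable (fun x₁ : I₁ → ℕ =>
        Phi μ (fun i : I₁ => Ka (Sum.inl i)) x₁ * ∏ i, lam (Sum.inl i) ^ x₁ i) →
      Summable (fun x₂ : I₂ → ℕ =>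
        Phi μ (fun i : I₂ => Ka (Sum.inr i)) x₂ * ∏ i, lam (Sum.inr i) ^ x₂ i) →
      (∑' x : I₁ ⊕ I₂ → ℕ, Phi μ Ka x * ∏ i, lam i ^ x i)⁻¹ =
        (∑' x₁ : I₁ → ℕ,
          Phi μ (fun i : I₁ => Ka (Sum.inl i)) x₁ * ∏ i, lam (Sum.inl i) ^ x₁ i)⁻¹ *
        (∑' x₂ : I₂ → ℕ,
          Phi μ (fun i : I₂ => Ka (Sum.inr i)) x₂ * ∏ i, lam (Sum.inr i) ^ x₂ i)⁻¹) := by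
  have hterm := Phi_mul_prod_pow_sum_type μ Ka hμ hKa hdisj lam
  have hterm₁_nonneg : 0 ≤ fun x₁ : I₁ → ℕ =>
      Phi μ (fun i => Ka (Sum.inl i)) x₁ * ∏ i, lam (Sum.inl i) ^ x₁ i := fun x₁ =>
    mul_nonneg (Phi_nonneg _ _ (fun k => (hμ k).le) x₁)
      (prod_nonneg fun i _ => pow_nonneg (hlam _) _)
  have hterm₂_nonneg : 0 ≤ fun x₂ : I₂ → ℕ =>
      Phi μ (fun i => Ka (Sum.inr i)) x₂ * ∏ i, lam (Sum.inr i) ^ x₂ i := fun x₂ =>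
    mul_nonneg (Phi_nonneg _ _ (fun k => (hμ k).le) x₂)
      (prod_nonneg fun i _ => pow_nonneg (hlam _) _)
  refine ⟨Phi_sum_type μ Ka hμ hKa hdisj, ?_, fun hs₁ hs₂ => ?_⟩
  · rw [← ENNReal.tsum_sumArrow_mul]
    simp_rw [hterm, ENNReal.ofReal_mul (hterm₁_nonneg _)]
  · rw [tsum_congr hterm, tsum_sumArrow_mul_of_nonneg hs₁ hs₂ hterm₁_nonneg hterm₂_nonneg, mul_inv]

/-- If the class set splits as `I = I₁ ⊕ I₂` with disjoint used server
sets, then the balance function factorizes, `Φ(x) = Φ₁(x|I₁) Φ₂(x|I₂)`; consequently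
`G(λ) = G₁(λ|I₁) G₂(λ|I₂)` (in `[0,∞]`) and, when these are finite, `ψ = ψ₁ ψ₂`. -/
theorem independent_subsystems_factorization
    {I₁ I₂ K : Type} [Fintype I₁] [DecidableEq I₁] [Nonempty I₁]
    [Fintype I₂] [DecidableEq I₂] [Nonempty I₂]
    [Fintype K] [DecidableEq K] [Nonempty K]
    (μ : K → ℝ) (hμ : ∀ k, 0 < μ k)
    (Ka : I₁ ⊕ I₂ → Finset K) (hKa : ∀ i, (Ka i).Nonempty)
    (hcov : ∀ k, ∃ i, k ∈ Ka i)
    (lam : I₁ ⊕ I₂ → ℝ) (hlam : ∀ i, 0 ≤ lam i)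
    (hdisj : Disjoint (Finset.univ.biUnion (fun i : I₁ => Ka (Sum.inl i)))
                      (Finset.univ.biUnion (fun i : I₂ => Ka (Sum.inr i)))) :
    (∀ x : I₁ ⊕ I₂ → ℕ,
      Phi μ Ka x =
        Phi μ (fun i : I₁ => Ka (Sum.inl i)) (fun i => x (Sum.inl i)) *
          Phi μ (fun i : I₂ => Ka (Sum.inr i)) (fun i => x (Sum.inr i))) ∧
    (∑' x : I₁ ⊕ I₂ → ℕ, ENNReal.ofReal (Phi μ Ka x * ∏ i, lam i ^ x i)) =
      (∑' x₁ : I₁ → ℕ, ENNReal.ofReal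
          (Phi μ (fun i : I₁ => Ka (Sum.inl i)) x₁ * ∏ i, lam (Sum.inl i) ^ x₁ i)) *
      (∑' x₂ : I₂ → ℕ, ENNReal.ofReal
          (Phi μ (fun i : I₂ => Ka (Sum.inr i)) x₂ * ∏ i, lam (Sum.inr i) ^ x₂ i)) ∧
    (Summable (fun x₁ : I₁ → ℕ =>
        Phi μ (fun i : I₁ => Ka (Sum.inl i)) x₁ * ∏ i, lam (Sum.inl i) ^ x₁ i) →
      Summable (fun x₂ : I₂ → ℕ =>
        Phi μ (fun i : I₂ => Ka (Sum.inr i)) x₂ * ∏ i, lam (Sum.inr i) ^ x₂ i) →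
      (∑' x : I₁ ⊕ I₂ → ℕ, Phi μ Ka x * ∏ i, lam i ^ x i)⁻¹ =
        (∑' x₁ : I₁ → ℕ,
          Phi μ (fun i : I₁ => Ka (Sum.inl i)) x₁ * ∏ i, lam (Sum.inl i) ^ x₁ i)⁻¹ *
        (∑' x₂ : I₂ → ℕ,
          Phi μ (fun i : I₂ => Ka (Sum.inr i)) x₂ * ∏ i, lam (Sum.inr i) ^ x₂ i)⁻¹) :=
  independent_subsystems_factorization_general μ hμ Ka hKa lam hlam hdisj
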